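/- Let n and k be positive integers with k ≥ n/2 and k ≤ n, and let p be the permutation of length n given by p = (k+1)(k+2)⋯n k(k-1)⋯1 (i.e., p(i) = k+i for 1 ≤ i ≤ n-k and p(n-k+j) = k+1-j for 1 ≤ j ≤ k). Then p avoids 312 and p² avoids 312. -/
import Mathlib


def Avoids312 {n : ℕ} (p : Equiv.Perm (Fin n)) : Prop :=
  ¬ ∃ a b c : Fin n, a < b ∧ b < c ∧ p b < p c ∧ p c < p a

/-- The unimodal permutation (k+1)(k+2)⋯n k(k-1)⋯1 with n/2 ≤ k ≤ n is strongly
312-avoiding (written 0-indexed). -/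
theorem unimodal_strongly_avoids_312 {n k : ℕ} (hn : 1 ≤ n) (hk : 1 ≤ k)
    (hk2 : n ≤ 2 * k) (hkn : k ≤ n) (p : Equiv.Perm (Fin n))
    (hp : ∀ i : Fin n, (p i : ℕ) = if (i : ℕ) < n - k then k + i else n - 1 - i) :
    Avoids312 p ∧ Avoids312 (p * p) := by
  constructor
  · rintro ⟨a, b, c, hab, hbc, h1, h2⟩
    have ha := a.isLt; have hb := b.isLt; have hc := c.isLt
    have hpa := hp a; have hpb := hp b; have hpc := hp c
    rw [Fin.lt_def] at hab hbc h1 h2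
    split_ifs at hpa hpb hpc <;> omega
  · rintro ⟨a, b, c, hab, hbc, h1, h2⟩
    have ha := a.isLt; have hb := b.isLt; have hc := c.isLt
    have hpa := hp a; have hpb := hp b; have hpc := hp c
    have hpa2 := hp (p a); have hpb2 := hp (p b); have hpc2 := hp (p c)
    simp only [Equiv.Perm.mul_apply] at h1 h2
    rw [Fin.lt_def] at hab hbc h1 h2
    split_ifs at hpa hpb hpc hpa2 hpb2 hpc2 <;> omega
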